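/- Let G be a finitely generated amenable group with finite symmetric generating set S, let (Λ_n) be a tempered Følner sequence, and for each p ∈ [0,1)^S let Φ_p ∈ ℬ(ℝ) be the almost-sure limit of the normalized cluster-size distribution functions F_ω(Λ_n)/K_ω(Λ_n) under ℙ_p. Then the function Ψ : [0,1)^S → ℬ(ℝ), p ↦ Φ_p, is continuous (with the ℓ²-metric on [0,1)^S and the supremum norm on ℬ(ℝ)). -/

import Mathlib

open Set Filter MeasureTheory Pointwise

/-- One step of an active path within `Λ`. -/
def percStep {G : Type*} [Group G] (S : Finset G) (ω : G → G → Bool) (Λ : Set G)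
    (a c : G) : Prop :=
  a ∈ Λ ∧ c ∈ Λ ∧ c * a⁻¹ ∈ S ∧ ω a (c * a⁻¹) = true ∧ ω c (a * c⁻¹) = true

/-- The cluster `C_x^Λ(ω)` of `x` in the configuration `ω`. -/
def percCluster {G : Type*} [Group G] (S : Finset G) (ω : G → G → Bool) (Λ : Set G)
    (x : G) : Set G :=
  {y | Relation.ReflTransGen (percStep S ω Λ) x y}

/-- `K_ω(Λ)`: the number of clusters in `Λ`. -/
noncomputable def clusterCount {G : Type*} [Group G] (S : Finset G) (ω : G → G → Bool)
    (Λ : Set G) : ℕ :=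
  Set.ncard {c : Set G | ∃ x ∈ Λ, c = percCluster S ω Λ x}

/-- `F_ω(Λ)(m)`: the number of clusters in `Λ` of size at most `m`. -/
noncomputable def Fdist {G : Type*} [Group G] (S : Finset G) (ω : G → G → Bool)
    (Λ : Set G) (m : ℝ) : ℕ :=
  Set.ncard {c : Set G | (∃ x ∈ Λ, c = percCluster S ω Λ x) ∧ (c.ncard : ℝ) ≤ m}

/-!
In a finite window `Λ` the cluster ratio `F_ω(Λ)(m) / K_ω(Λ)` depends only on the finitely
many bond variables in `Λ × S`, so its `ℙ_p`-mean is a finite sum, and by dominated convergence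
`Φ_p(m)` is the limit of these means along `Λ_n`. Pass from `p` to `q` one bond variable at a
time: each step changes the mean by `|p_s - q_s|` times the expected effect of closing a single
bond. Closing a bond changes `F` and `K` by at most two, hence the ratio by at most `4 / K`, and
`K` exceeds the number of isolated vertices, whose mean is of order `|Λ| ∏ₛ (1 - p_s)` and which,
by Chebyshev's inequality, rarely falls below half of it. So each of the `|Λ| |S|` steps costs
`O(|p_s - q_s| / |Λ|)`, which gives `|Φ_q(m) - Φ_p(m)| ≤ C(p) ∑ₛ |p_s - q_s|` for `q` near `p`.
-/

lemma Relation.ReflTransGen.cases_of_le_sup_edge {α : Type*} {R R' : α → α → Prop} {a b : α}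
    (h : ∀ x y, R' x y → R x y ∨ (x = a ∧ y = b) ∨ (x = b ∧ y = a)) {x y : α}
    (hxy : Relation.ReflTransGen R' x y) :
    Relation.ReflTransGen R x y ∨ (Relation.ReflTransGen R x a ∧ R' a b) ∨
      (Relation.ReflTransGen R x b ∧ R' b a) := by
  induction hxy with
  | refl => exact Or.inl .refl
  | tail _ hstep ih =>
    rcases ih with ih | ih
    · rcases h _ _ hstep with hR | ⟨rfl, rfl⟩ | ⟨rfl, rfl⟩
      · exact Or.inl (ih.tail hR)
      · exact Or.inr (Or.inl ⟨ih, hstep⟩)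
      · exact Or.inr (Or.inr ⟨ih, hstep⟩)
    · exact Or.inr ih

lemma abs_ncard_sub_ncard_le_two {α : Type*} {A B : Set α} {a b c : α} (hA : A.Finite)
    (hB : B.Finite) (hAB : A \ {a, b} ⊆ B) (hBA : B \ {c} ⊆ A) :
    |(A.ncard : ℝ) - B.ncard| ≤ 2 := by
  have h1 : A.ncard ≤ B.ncard + 2 :=
    calc A.ncard ≤ (A \ {a, b}).ncard + ({a, b} : Set α).ncard :=
          ncard_le_ncard_sdiff_add_ncard _ _
      _ ≤ B.ncard + 2 := add_le_add (ncard_le_ncard hAB hB)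
          ((ncard_insert_le _ _).trans (by rw [ncard_singleton]))
  have h2 : B.ncard ≤ A.ncard + 1 :=
    calc B.ncard ≤ (B \ {c}).ncard + ({c} : Set α).ncard := ncard_le_ncard_sdiff_add_ncard _ _
      _ ≤ A.ncard + 1 := by rw [ncard_singleton]; exact add_le_add_left (ncard_le_ncard hBA hA) 1
  have h1' : (A.ncard : ℝ) ≤ B.ncard + 2 := by exact_mod_cast h1
  have h2' : (B.ncard : ℝ) ≤ A.ncard + 1 := by exact_mod_cast h2
  rw [abs_sub_le_iff]
  constructor <;> linarith

lemma abs_div_sub_div_le_of_abs_sub_le {F K F' K' κ c : ℝ} (hκ : 0 < κ) (hK : κ ≤ K)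
    (hK' : κ ≤ K') (hF' : 0 ≤ F') (hFK' : F' ≤ K') (hF : |F - F'| ≤ c) (hKK : |K - K'| ≤ c) :
    |F / K - F' / K'| ≤ 2 * c / κ := by
  have hK0 : 0 < K := hκ.trans_le hK
  have hK'0 : 0 < K' := hκ.trans_le hK'
  have hnum : |(F - F') * K' + F' * (K' - K)| ≤ 2 * c * K' :=
    calc |(F - F') * K' + F' * (K' - K)| ≤ |F - F'| * K' + F' * |K - K'| := by
          refine (abs_add_le _ _).trans (le_of_eq ?_)
          rw [abs_mul, abs_mul, abs_of_pos hK'0, abs_of_nonneg hF', abs_sub_comm K']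
      _ ≤ c * K' + K' * c := add_le_add (mul_le_mul_of_nonneg_right hF hK'0.le)
          (mul_le_mul hFK' hKK (abs_nonneg _) hK'0.le)
      _ = 2 * c * K' := by ring
  rw [show F / K - F' / K' = ((F - F') * K' + F' * (K' - K)) / (K * K') by field_simp; ring,
    abs_div, abs_of_pos (mul_pos hK0 hK'0), div_le_div_iff₀ (mul_pos hK0 hK'0) hκ]
  calc _ ≤ 2 * c * K' * κ := mul_le_mul_of_nonneg_right hnum hκ.le
    _ ≤ 2 * c * K' * K := by
        have : 0 ≤ 2 * c * K' := le_trans (abs_nonneg _) hnum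
        exact mul_le_mul_of_nonneg_left hK this
    _ = _ := by ring

lemma PiLp.sum_dist_apply_le {ι : Type*} [Fintype ι] {p : ENNReal} [Fact (1 ≤ p)]
    {β : ι → Type*} [∀ i, PseudoMetricSpace (β i)] (x y : PiLp p β) :
    ∑ i, dist (x i) (y i) ≤ Fintype.card ι * dist x y := by
  simpa using Finset.sum_le_sum fun i (_ : i ∈ Finset.univ) => PiLp.dist_apply_le x y i

lemma prod_le_apply_of_nonneg_of_le_one {ι : Type*} [Fintype ι] {f : ι → ℝ} (h0 : ∀ i, 0 ≤ f i)
    (h1 : ∀ i, f i ≤ 1) (i : ι) : ∏ j, f j ≤ f i :=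
  (Finset.prod_le_prod_of_subset_of_le_one (Finset.singleton_subset_iff.2 (Finset.mem_univ i))
    (fun j _ => h0 j) fun j _ _ => h1 j).trans_eq (Finset.prod_singleton _ _)

section BernoulliExpect

open Finset Function

variable {ι : Type*} [Fintype ι] [DecidableEq ι]

noncomputable def bernoulliMass (p : ι → ℝ) (v : ι → Bool) : ℝ :=
  ∏ j, if v j then p j else 1 - p j

noncomputable def bernoulliExpect (p : ι → ℝ) (f : (ι → Bool) → ℝ) : ℝ :=
  ∑ v, bernoulliMass p v * f v

variable {p : ι → ℝ} {f g : (ι → Bool) → ℝ}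

omit [DecidableEq ι] in
lemma bernoulliMass_nonneg (hp : ∀ j, 0 ≤ p j ∧ p j ≤ 1) (v : ι → Bool) :
    0 ≤ bernoulliMass p v :=
  prod_nonneg fun j _ => by split_ifs <;> linarith [hp j]

lemma bernoulliExpect_mono (hp : ∀ j, 0 ≤ p j ∧ p j ≤ 1) (h : ∀ v, f v ≤ g v) :
    bernoulliExpect p f ≤ bernoulliExpect p g :=
  sum_le_sum fun v _ => mul_le_mul_of_nonneg_left (h v) (bernoulliMass_nonneg hp v)

lemma bernoulliExpect_nonneg (hp : ∀ j, 0 ≤ p j ∧ p j ≤ 1) (h : ∀ v, 0 ≤ f v) :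
    0 ≤ bernoulliExpect p f :=
  sum_nonneg fun v _ => mul_nonneg (bernoulliMass_nonneg hp v) (h v)

lemma abs_bernoulliExpect_le (hp : ∀ j, 0 ≤ p j ∧ p j ≤ 1) :
    |bernoulliExpect p f| ≤ bernoulliExpect p fun v => |f v| := by
  refine (abs_sum_le_sum_abs _ _).trans (le_of_eq (sum_congr rfl fun v _ => ?_))
  rw [abs_mul, abs_of_nonneg (bernoulliMass_nonneg hp v)]

lemma bernoulliExpect_add :
    bernoulliExpect p (fun v => f v + g v) = bernoulliExpect p f + bernoulliExpect p g := by
  simp only [bernoulliExpect, mul_add, sum_add_distrib]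

lemma bernoulliExpect_sub :
    bernoulliExpect p (fun v => f v - g v) = bernoulliExpect p f - bernoulliExpect p g := by
  simp only [bernoulliExpect, mul_sub, sum_sub_distrib]

lemma bernoulliExpect_const_mul (c : ℝ) :
    bernoulliExpect p (fun v => c * f v) = c * bernoulliExpect p f := by
  simp only [bernoulliExpect, mul_sum]; exact sum_congr rfl fun v _ => by ring

lemma bernoulliExpect_sum {β : Type*} (B : Finset β) (h : β → (ι → Bool) → ℝ) :
    bernoulliExpect p (fun v => ∑ y ∈ B, h y v) = ∑ y ∈ B, bernoulliExpect p (h y) := by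
  simp only [bernoulliExpect, mul_sum]; exact sum_comm

lemma bernoulliExpect_forall_false (D : Finset ι) :
    bernoulliExpect p (fun v => if ∀ j ∈ D, v j = false then 1 else 0) = ∏ j ∈ D, (1 - p j) := by
  have hmass : ∀ v : ι → Bool, bernoulliMass p v * (if ∀ j ∈ D, v j = false then 1 else 0) =
      ∏ j, ((if v j then p j else 1 - p j) *
        if j ∈ D then (if v j = false then 1 else 0) else 1) := by
    intro v
    rw [bernoulliMass, prod_mul_distrib, Fintype.prod_ite_mem, prod_boole]
    congr
  simp only [bernoulliExpect, hmass]
  rw [← Fintype.prod_sum (fun j (b : Bool) =>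
    (if b then p j else 1 - p j) * if j ∈ D then (if b = false then 1 else 0) else 1),
    ← Fintype.prod_ite_mem D (fun j => 1 - p j)]
  refine prod_congr rfl fun j _ => ?_
  by_cases hj : j ∈ D <;> simp [hj]

lemma bernoulliExpect_one : bernoulliExpect p (fun _ => 1) = 1 := by
  simpa using bernoulliExpect_forall_false (p := p) ∅

omit [Fintype ι] in
lemma update_nonneg_and_le_one (hp : ∀ j, 0 ≤ p j ∧ p j ≤ 1) (j₀ : ι) {c : ℝ}
    (hc : 0 ≤ c ∧ c ≤ 1) (j : ι) : 0 ≤ update p j₀ c j ∧ update p j₀ c j ≤ 1 := by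
  rw [update_apply]; split_ifs; exacts [hc, hp j]

lemma bernoulliMass_eq_mul_prod_erase (j₀ : ι) (v : ι → Bool) :
    bernoulliMass p v =
      (if v j₀ then p j₀ else 1 - p j₀) * ∏ j ∈ univ.erase j₀, if v j then p j else 1 - p j :=
  (mul_prod_erase _ _ (mem_univ j₀)).symm

lemma bernoulliMass_eq_update (j₀ : ι) (v : ι → Bool) :
    bernoulliMass p v = p j₀ * bernoulliMass (update p j₀ 1) v +
      (1 - p j₀) * bernoulliMass (update p j₀ 0) v := by
  have hrest : ∀ c, (∏ j ∈ univ.erase j₀, if v j then update p j₀ c j else 1 - update p j₀ c j) =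
      ∏ j ∈ univ.erase j₀, if v j then p j else 1 - p j :=
    fun c => prod_congr rfl fun j hj => by rw [update_of_ne (ne_of_mem_erase hj)]
  simp only [bernoulliMass_eq_mul_prod_erase j₀ v, hrest, update_self]
  cases v j₀ <;> simp

lemma bernoulliExpect_eq_update (j₀ : ι) :
    bernoulliExpect p f = p j₀ * bernoulliExpect (update p j₀ 1) f +
      (1 - p j₀) * bernoulliExpect (update p j₀ 0) f := by
  simp only [bernoulliExpect, mul_sum, ← sum_add_distrib]
  exact sum_congr rfl fun v _ => by rw [bernoulliMass_eq_update j₀ v]; ring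

/-- The involution flipping coordinate `j₀` exchanges the two conditioned measures. -/
lemma bernoulliExpect_update_zero (j₀ : ι) :
    bernoulliExpect (update p j₀ 0) f =
      bernoulliExpect (update p j₀ 1) fun v => f (update v j₀ false) := by
  have hflip : Involutive fun v : ι → Bool => update v j₀ !v j₀ := fun v => by simp
  rw [bernoulliExpect, ← Equiv.sum_comp hflip.toPerm]
  refine sum_congr rfl fun v _ => ?_
  simp only [Involutive.coe_toPerm, bernoulliMass_eq_mul_prod_erase j₀]
  have hrest : (∏ j ∈ univ.erase j₀, if update v j₀ (!v j₀) j then update p j₀ 0 j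
      else 1 - update p j₀ 0 j) = ∏ j ∈ univ.erase j₀, if v j then update p j₀ 1 j
      else 1 - update p j₀ 1 j :=
    prod_congr rfl fun j hj => by simp [update_of_ne (ne_of_mem_erase hj)]
  rw [hrest]
  cases hv : v j₀ <;> simp

lemma bernoulliExpect_sub_of_forall_ne {q : ι → ℝ} {j₀ : ι} (hpq : ∀ j ≠ j₀, p j = q j) :
    bernoulliExpect p f - bernoulliExpect q f =
      (p j₀ - q j₀) * bernoulliExpect (update p j₀ 1) fun v => f v - f (update v j₀ false) := by
  have hupd : ∀ c, update q j₀ c = update p j₀ c := fun c => by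
    ext j; by_cases hj : j = j₀
    · subst hj; simp
    · simp [update_of_ne hj, hpq j hj]
  rw [bernoulliExpect_eq_update j₀ (p := p), bernoulliExpect_eq_update j₀ (p := q), hupd, hupd,
    bernoulliExpect_sub, bernoulliExpect_update_zero]
  ring

/-- Changing the parameters one coordinate at a time: the cost of coordinate `j` is
`|p j - q j|` times the mean oscillation of `f` in direction `j`. -/
lemma abs_bernoulliExpect_sub_le {q : ι → ℝ} (hp : ∀ j, 0 ≤ p j ∧ p j ≤ 1)
    (hq : ∀ j, 0 ≤ q j ∧ q j ≤ 1) (B : ℝ)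
    (hB : ∀ (T : Finset ι) (j : ι),
      bernoulliExpect (update (T.piecewise q p) j 1) (fun v => |f v - f (update v j false)|) ≤ B) :
    |bernoulliExpect p f - bernoulliExpect q f| ≤ (∑ j, |p j - q j|) * B := by
  suffices h : ∀ T : Finset ι, |bernoulliExpect p f - bernoulliExpect (T.piecewise q p) f| ≤
      (∑ j ∈ T, |p j - q j|) * B by
    simpa using h univ
  intro T
  induction T using Finset.induction_on with
  | empty => simp
  | insert j T hj ih =>
    set r := T.piecewise q p
    have hr : ∀ k, 0 ≤ r k ∧ r k ≤ 1 := fun k =>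
      T.piecewise_cases q p (fun x => 0 ≤ x ∧ x ≤ 1) (hq k) (hp k)
    have hr1 := update_nonneg_and_le_one hr j ⟨zero_le_one, le_rfl⟩
    have hrj : r j = p j := Finset.piecewise_eq_of_notMem _ _ _ hj
    have hstep := bernoulliExpect_sub_of_forall_ne (f := f) (q := update r j (q j)) (j₀ := j)
      fun k hk => (update_of_ne hk _ _).symm
    rw [update_self, hrj] at hstep
    rw [Finset.piecewise_insert, sum_insert hj, add_mul]
    calc |bernoulliExpect p f - bernoulliExpect (update r j (q j)) f|
        ≤ |bernoulliExpect p f - bernoulliExpect r f| +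
          |bernoulliExpect r f - bernoulliExpect (update r j (q j)) f| := abs_sub_le _ _ _
      _ ≤ (∑ j ∈ T, |p j - q j|) * B + |p j - q j| * B := by
        refine add_le_add ih ?_
        rw [hstep, abs_mul]
        exact mul_le_mul_of_nonneg_left ((abs_bernoulliExpect_le hr1).trans (hB T j))
          (abs_nonneg _)
      _ = _ := add_comm _ _

end BernoulliExpect

section ClosedRows

open Finset

variable {α β : Type*} [Fintype α] [Fintype β] [DecidableEq α] [DecidableEq β]
  {p : α × β → ℝ}

/-- Read `α × β` as vertices × generators: a closed row is an isolated vertex. -/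
def closedRows (A : Finset α) (v : α × β → Bool) : Finset α :=
  {y ∈ A | ∀ b, v (y, b) = false}

noncomputable def rowClosedProb (p : α × β → ℝ) (y : α) : ℝ :=
  ∏ b, (1 - p (y, b))

omit [Fintype α] [DecidableEq α] [DecidableEq β] in
lemma rowClosedProb_nonneg (hp : ∀ j, 0 ≤ p j ∧ p j ≤ 1) (y : α) : 0 ≤ rowClosedProb p y :=
  prod_nonneg fun b _ => by linarith [hp (y, b)]

lemma bernoulliExpect_rows_closed (Y : Finset α) :
    bernoulliExpect p (fun v => if ∀ y ∈ Y, ∀ b, v (y, b) = false then 1 else 0) =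
      ∏ y ∈ Y, rowClosedProb p y := by
  have hD : ∀ v : α × β → Bool,
      (∀ y ∈ Y, ∀ b, v (y, b) = false) ↔ ∀ j ∈ Y ×ˢ (univ : Finset β), v j = false := by
    simp only [mem_product, Finset.mem_univ, and_true, Prod.forall]
    exact fun v => ⟨fun h y b hy => h y hy b, fun h y hy b => h y b hy⟩
  simp_rw [hD]
  rw [bernoulliExpect_forall_false, prod_product]
  rfl

omit [Fintype α] [DecidableEq α] [DecidableEq β] in
lemma card_closedRows_eq_sum (A : Finset α) (v : α × β → Bool) :
    ((closedRows A v).card : ℝ) = ∑ y ∈ A, if ∀ b, v (y, b) = false then 1 else 0 := by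
  simp only [closedRows, card_filter, Nat.cast_sum, Nat.cast_ite, Nat.cast_one, Nat.cast_zero]

lemma bernoulliExpect_card_closedRows (A : Finset α) :
    bernoulliExpect p (fun v => ((closedRows A v).card : ℝ)) = ∑ y ∈ A, rowClosedProb p y := by
  simp_rw [card_closedRows_eq_sum, bernoulliExpect_sum]
  refine sum_congr rfl fun y _ => ?_
  simpa using bernoulliExpect_rows_closed (p := p) {y}

/-- Distinct rows involve disjoint coordinates, so they are closed independently. -/
lemma bernoulliExpect_card_closedRows_sq_le (hp : ∀ j, 0 ≤ p j ∧ p j ≤ 1) (A : Finset α) :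
    bernoulliExpect p (fun v => ((closedRows A v).card : ℝ) ^ 2) ≤
      ∑ y ∈ A, rowClosedProb p y + (∑ y ∈ A, rowClosedProb p y) ^ 2 := by
  have hsq : ∀ v : α × β → Bool, ((closedRows A v).card : ℝ) ^ 2 = ∑ y ∈ A, ∑ y' ∈ A,
      if ∀ x ∈ ({y, y'} : Finset α), ∀ b, v (x, b) = false then 1 else 0 := by
    intro v
    rw [card_closedRows_eq_sum, sq, sum_mul_sum]
    refine sum_congr rfl fun y _ => sum_congr rfl fun y' _ => ?_
    simp only [Finset.mem_insert, Finset.mem_singleton, forall_eq_or_imp, forall_eq]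
    split_ifs <;> simp_all
  simp_rw [hsq, bernoulliExpect_sum, bernoulliExpect_rows_closed]
  calc ∑ y ∈ A, ∑ y' ∈ A, ∏ x ∈ {y, y'}, rowClosedProb p x
      ≤ ∑ y ∈ A, ∑ y' ∈ A, (rowClosedProb p y * rowClosedProb p y' +
          if y = y' then rowClosedProb p y' else 0) := by
        refine sum_le_sum fun y _ => sum_le_sum fun y' _ => ?_
        have h0 := rowClosedProb_nonneg hp y
        by_cases hyy : y = y'
        · subst hyy; simp; positivity
        · rw [prod_pair hyy, if_neg hyy, add_zero]
    _ = _ := by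
        simp only [sum_add_distrib, sum_ite_eq, ← sum_mul_sum]
        rw [sum_ite_mem, Finset.inter_self, sq, add_comm]

lemma bernoulliExpect_sq_card_closedRows_sub_le (hp : ∀ j, 0 ≤ p j ∧ p j ≤ 1) (A : Finset α) :
    bernoulliExpect p (fun v => (((closedRows A v).card : ℝ) - ∑ y ∈ A, rowClosedProb p y) ^ 2) ≤
      ∑ y ∈ A, rowClosedProb p y := by
  set μ := ∑ y ∈ A, rowClosedProb p y
  have hexp : ∀ v : α × β → Bool, (((closedRows A v).card : ℝ) - μ) ^ 2 =
      ((closedRows A v).card : ℝ) ^ 2 + ((-2 * μ) * (closedRows A v).card + μ ^ 2 * 1) :=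
    fun v => by ring
  simp_rw [hexp]
  rw [bernoulliExpect_add, bernoulliExpect_add, bernoulliExpect_const_mul,
    bernoulliExpect_const_mul, bernoulliExpect_card_closedRows, bernoulliExpect_one]
  linarith [bernoulliExpect_card_closedRows_sq_le hp A]

/-- Chebyshev's inequality, in a form that stays meaningful when the mean is small. -/
lemma bernoulliExpect_card_closedRows_lt_half_le (hp : ∀ j, 0 ≤ p j ∧ p j ≤ 1) (A : Finset α) :
    (1 + ∑ y ∈ A, rowClosedProb p y) * bernoulliExpect p
      (fun v => if 2 * ((closedRows A v).card : ℝ) < ∑ y ∈ A, rowClosedProb p y then 1 else 0)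
      ≤ 5 := by
  set μ := ∑ y ∈ A, rowClosedProb p y
  set P := bernoulliExpect p fun v => if 2 * ((closedRows A v).card : ℝ) < μ then 1 else 0
  have hμ : 0 ≤ μ := sum_nonneg fun y _ => rowClosedProb_nonneg hp y
  have hP0 : 0 ≤ P := bernoulliExpect_nonneg hp fun v => by split_ifs <;> norm_num
  have hP1 : P ≤ 1 := by
    rw [← bernoulliExpect_one (p := p)]
    exact bernoulliExpect_mono hp fun v => by split_ifs <;> norm_num
  have hcheb : (μ / 2) ^ 2 * P ≤ μ := by
    rw [← bernoulliExpect_const_mul]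
    refine (bernoulliExpect_mono hp fun v => ?_).trans
      (bernoulliExpect_sq_card_closedRows_sub_le hp A)
    have hZ : (0 : ℝ) ≤ (closedRows A v).card := Nat.cast_nonneg _
    split_ifs with h
    · nlinarith
    · simpa using sq_nonneg (((closedRows A v).card : ℝ) - μ)
  rcases le_or_gt μ 4 with hμ4 | hμ4
  · nlinarith
  · have : μ * P ≤ 4 := by nlinarith
    nlinarith

lemma bernoulliExpect_min_one_div_card_closedRows_le (hp : ∀ j, 0 ≤ p j ∧ p j ≤ 1)
    (A : Finset α) {c : ℝ} (hc : 0 ≤ c) :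
    bernoulliExpect p (fun v => min 1 (c / (1 + (closedRows A v).card))) ≤
      (5 + 2 * c) / (1 + ∑ y ∈ A, rowClosedProb p y) := by
  set μ := ∑ y ∈ A, rowClosedProb p y
  have hμ : 0 ≤ μ := sum_nonneg fun y _ => rowClosedProb_nonneg hp y
  have hpt : ∀ v : α × β → Bool, min 1 (c / (1 + (closedRows A v).card)) ≤
      (if 2 * ((closedRows A v).card : ℝ) < μ then 1 else 0) + 2 * c / (2 + μ) * 1 := by
    intro v
    have hZ : (0 : ℝ) ≤ (closedRows A v).card := Nat.cast_nonneg _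
    have : 0 ≤ 2 * c / (2 + μ) := by positivity
    split_ifs with h
    · linarith [min_le_left 1 (c / (1 + (closedRows A v).card))]
    · refine (min_le_right _ _).trans ?_
      rw [mul_one, zero_add, div_le_div_iff₀ (by positivity) (by positivity)]
      nlinarith
  have htail := bernoulliExpect_card_closedRows_lt_half_le hp A
  calc _ ≤ _ := bernoulliExpect_mono hp hpt
    _ = _ := by rw [bernoulliExpect_add, bernoulliExpect_const_mul, bernoulliExpect_one]
    _ ≤ 5 / (1 + μ) + 2 * c / (1 + μ) := by
        rw [mul_one]
        gcongr
        · rw [le_div_iff₀ (by positivity), mul_comm]; exact htail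
        · linarith
    _ = _ := by ring

end ClosedRows

section Clusters

variable {G : Type*} [Group G] {S : Finset G} {ω ω' : G → G → Bool} {Λ : Set G}

def clusterSet (S : Finset G) (ω : G → G → Bool) (Λ : Set G) : Set (Set G) :=
  {c | ∃ x ∈ Λ, c = percCluster S ω Λ x}

noncomputable def clusterRatio (S : Finset G) (Λ : Set G) (m : ℝ) (ω : G → G → Bool) : ℝ :=
  (Fdist S ω Λ m : ℝ) / clusterCount S ω Λ

lemma clusterSet_finite (hΛ : Λ.Finite) : (clusterSet S ω Λ).Finite :=
  (hΛ.image (percCluster S ω Λ)).subset fun _ ⟨x, hx, hc⟩ => ⟨x, hx, hc.symm⟩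

lemma clusterRatio_nonneg (m : ℝ) : 0 ≤ clusterRatio S Λ m ω := by
  unfold clusterRatio; positivity

lemma clusterRatio_le_one (hΛ : Λ.Finite) (m : ℝ) : clusterRatio S Λ m ω ≤ 1 :=
  div_le_one_of_le₀ (Nat.cast_le.2 (ncard_le_ncard (fun _ hc => hc.1) (clusterSet_finite hΛ)))
    (Nat.cast_nonneg _)

lemma percStep_symm (hsym : ∀ s ∈ S, s⁻¹ ∈ S) : Std.Symm (percStep S ω Λ) :=
  ⟨fun _ _ ⟨ha, hc, hS, h1, h2⟩ => ⟨hc, ha, by simpa using hsym _ hS, h2, h1⟩⟩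

lemma percCluster_eq_of_reflTransGen (hsym : ∀ s ∈ S, s⁻¹ ∈ S) {x y : G}
    (h : Relation.ReflTransGen (percStep S ω Λ) x y) :
    percCluster S ω Λ x = percCluster S ω Λ y := by
  have := percStep_symm (ω := ω) (Λ := Λ) hsym
  ext w
  exact ⟨fun hw => (Std.Symm.symm _ _ h).trans hw, h.trans⟩

lemma percCluster_eq_singleton {x : G} (h0 : ∀ s ∈ S, ω x s = false) :
    percCluster S ω Λ x = {x} := by
  ext w
  refine ⟨fun hw => ?_, fun hw => hw ▸ .refl⟩
  rcases Relation.ReflTransGen.cases_head hw with h | ⟨c, ⟨_, _, hS, h1, _⟩, _⟩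
  · exact h.symm
  · simp [h0 _ hS] at h1

/-- Each closed vertex forms a cluster of its own. -/
lemma card_add_one_le_clusterCount (hΛ : Λ.Finite) {x₀ : G} (hx₀ : x₀ ∈ Λ) (T : Finset G)
    (hT : ∀ y ∈ T, y ∈ Λ ∧ y ≠ x₀ ∧ ∀ s ∈ S, ω y s = false) :
    T.card + 1 ≤ clusterCount S ω Λ := by
  classical
  have hinj : InjOn (percCluster S ω Λ) ↑(insert x₀ T) := by
    have hclosed : ∀ a ∈ T, ∀ b, percCluster S ω Λ a = percCluster S ω Λ b → a = b := by
      intro a ha b hab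
      have hb : b ∈ percCluster S ω Λ a := hab ▸ .refl
      rw [percCluster_eq_singleton (hT a ha).2.2] at hb
      exact hb.symm
    intro a ha b hb hab
    simp only [Finset.coe_insert, mem_insert_iff, Finset.mem_coe] at ha hb
    rcases ha with rfl | ha
    · rcases hb with rfl | hb
      · rfl
      · exact (hclosed b hb a hab.symm).symm
    · exact hclosed a ha b hab
  have hsub : ↑((insert x₀ T).image (percCluster S ω Λ)) ⊆ clusterSet S ω Λ := by
    intro c hc
    simp only [Finset.coe_image, Finset.coe_insert, mem_image, mem_insert_iff,
      Finset.mem_coe] at hc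
    obtain ⟨y, hy, rfl⟩ := hc
    exact ⟨y, hy.elim (· ▸ hx₀) fun hy => (hT y hy).1, rfl⟩
  calc T.card + 1 = ((insert x₀ T).image (percCluster S ω Λ)).card := by
        rw [Finset.card_image_of_injOn hinj, Finset.card_insert_of_notMem fun h => (hT _ h).2.1 rfl]
    _ ≤ clusterCount S ω Λ := by
        rw [← ncard_coe_finset]; exact ncard_le_ncard hsub (clusterSet_finite hΛ)

lemma percStep_congr (hsym : ∀ s ∈ S, s⁻¹ ∈ S) (h : ∀ x ∈ Λ, ∀ s ∈ S, ω x s = ω' x s) :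
    percStep S ω Λ = percStep S ω' Λ := by
  ext a c
  refine and_congr_right fun ha => and_congr_right fun hc => and_congr_right fun hS => ?_
  have hS' : a * c⁻¹ ∈ S := by simpa using hsym _ hS
  rw [h a ha _ hS, h c hc _ hS']

lemma clusterRatio_congr (hsym : ∀ s ∈ S, s⁻¹ ∈ S) (h : ∀ x ∈ Λ, ∀ s ∈ S, ω x s = ω' x s)
    (m : ℝ) : clusterRatio S Λ m ω = clusterRatio S Λ m ω' := by
  have hC : percCluster S ω Λ = percCluster S ω' Λ := by
    ext x; simp only [percCluster, percStep_congr hsym h]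
  simp only [clusterRatio, Fdist, clusterCount, hC]

section ClosingOneBond

variable {x₀ s₀ : G} (hω : ∀ x s, ω x s = true ↔ ω' x s = true ∧ ¬(x = x₀ ∧ s = s₀))
include hω

lemma percStep_mono_of_closeBond {a c : G} (h : percStep S ω Λ a c) : percStep S ω' Λ a c :=
  let ⟨ha, hc, hS, h1, h2⟩ := h
  ⟨ha, hc, hS, ((hω _ _).1 h1).1, ((hω _ _).1 h2).1⟩

lemma percStep_of_closeBond {a c : G} (h : percStep S ω' Λ a c) :
    percStep S ω Λ a c ∨ (a = x₀ ∧ c = s₀ * x₀) ∨ (a = s₀ * x₀ ∧ c = x₀) := by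
  obtain ⟨ha, hc, hS, h1, h2⟩ := h
  by_cases hA : a = x₀ ∧ c * a⁻¹ = s₀
  · exact Or.inr (Or.inl ⟨hA.1, by rw [← hA.2, ← hA.1, inv_mul_cancel_right]⟩)
  by_cases hB : c = x₀ ∧ a * c⁻¹ = s₀
  · exact Or.inr (Or.inr ⟨by rw [← hB.2, ← hB.1, inv_mul_cancel_right], hB.1⟩)
  exact Or.inl ⟨ha, hc, hS, (hω _ _).2 ⟨h1, hA⟩, (hω _ _).2 ⟨h2, hB⟩⟩

lemma reflTransGen_of_closeBond {y w : G}
    (h : Relation.ReflTransGen (percStep S ω' Λ) y w) :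
    Relation.ReflTransGen (percStep S ω Λ) y w ∨
      (Relation.ReflTransGen (percStep S ω Λ) y x₀ ∧ percStep S ω' Λ x₀ (s₀ * x₀)) ∨
      (Relation.ReflTransGen (percStep S ω Λ) y (s₀ * x₀) ∧ percStep S ω' Λ (s₀ * x₀) x₀) :=
  h.cases_of_le_sup_edge fun _ _ => percStep_of_closeBond hω

lemma percCluster_subset_of_closeBond (y : G) : percCluster S ω Λ y ⊆ percCluster S ω' Λ y :=
  fun _ h => Relation.ReflTransGen.mono (fun _ _ => percStep_mono_of_closeBond hω) _ _ h

lemma clusterSet_sdiff_subset_of_closeBond (hsym : ∀ s ∈ S, s⁻¹ ∈ S) :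
    clusterSet S ω Λ \ {percCluster S ω Λ x₀, percCluster S ω Λ (s₀ * x₀)} ⊆
      clusterSet S ω' Λ := by
  rintro _ ⟨⟨y, hy, rfl⟩, hne⟩
  simp only [mem_insert_iff, mem_singleton_iff, not_or] at hne
  refine ⟨y, hy, (percCluster_subset_of_closeBond hω y).antisymm fun w hw => ?_⟩
  rcases reflTransGen_of_closeBond hω hw with h | ⟨h, _⟩ | ⟨h, _⟩
  · exact h
  · exact absurd (percCluster_eq_of_reflTransGen hsym h) hne.1
  · exact absurd (percCluster_eq_of_reflTransGen hsym h) hne.2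

lemma clusterSet_sdiff_subset_of_openBond (hsym : ∀ s ∈ S, s⁻¹ ∈ S) :
    clusterSet S ω' Λ \ {percCluster S ω' Λ x₀} ⊆ clusterSet S ω Λ := by
  rintro _ ⟨⟨y, hy, rfl⟩, hne⟩
  rw [mem_singleton_iff] at hne
  have hmono : ∀ {a b}, Relation.ReflTransGen (percStep S ω Λ) a b →
      Relation.ReflTransGen (percStep S ω' Λ) a b :=
    fun h => Relation.ReflTransGen.mono (fun _ _ => percStep_mono_of_closeBond hω) _ _ h
  refine ⟨y, hy, subset_antisymm (fun w hw => ?_) (percCluster_subset_of_closeBond hω y)⟩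
  rcases reflTransGen_of_closeBond hω hw with h | ⟨h, _⟩ | ⟨h, hstep⟩
  · exact h
  · exact absurd (percCluster_eq_of_reflTransGen hsym (hmono h)) hne
  · exact absurd (percCluster_eq_of_reflTransGen hsym ((hmono h).tail hstep)) hne

lemma abs_clusterRatio_sub_le_of_closeBond (hsym : ∀ s ∈ S, s⁻¹ ∈ S) (hΛ : Λ.Finite) (m : ℝ)
    {κ : ℝ} (hκ : 0 < κ) (hK : κ ≤ clusterCount S ω Λ) (hK' : κ ≤ clusterCount S ω' Λ) :
    |clusterRatio S Λ m ω - clusterRatio S Λ m ω'| ≤ 4 / κ := by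
  have h₁ := clusterSet_sdiff_subset_of_closeBond (Λ := Λ) hω hsym
  have h₂ := clusterSet_sdiff_subset_of_openBond (Λ := Λ) hω hsym
  have hfin := clusterSet_finite (S := S) (ω := ω) hΛ
  have hfin' := clusterSet_finite (S := S) (ω := ω') hΛ
  have hF : |(Fdist S ω Λ m : ℝ) - Fdist S ω' Λ m| ≤ 2 :=
    abs_ncard_sub_ncard_le_two (hfin.inter_of_left _) (hfin'.inter_of_left _)
      (fun c hc => ⟨h₁ ⟨hc.1.1, hc.2⟩, hc.1.2⟩) (fun c hc => ⟨h₂ ⟨hc.1.1, hc.2⟩, hc.1.2⟩)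
  have hKK : |(clusterCount S ω Λ : ℝ) - clusterCount S ω' Λ| ≤ 2 :=
    abs_ncard_sub_ncard_le_two hfin hfin' h₁ h₂
  have hFK' : (Fdist S ω' Λ m : ℝ) ≤ clusterCount S ω' Λ :=
    Nat.cast_le.2 (ncard_le_ncard (fun _ hc => hc.1) hfin')
  have := abs_div_sub_div_le_of_abs_sub_le hκ hK hK' (Nat.cast_nonneg _) hFK' hF hKK
  rwa [show (2 : ℝ) * 2 = 4 by norm_num] at this

end ClosingOneBond

end Clusters

section Window

variable {G : Type*} [Group G] [DecidableEq G] {S Λ : Finset G}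

def extendCfg (v : Λ × S → Bool) : G → G → Bool :=
  fun x s => if h : x ∈ Λ ∧ s ∈ S then v (⟨x, h.1⟩, ⟨s, h.2⟩) else false

def restrictCfg (S Λ : Finset G) (ω : G → G → Bool) : Λ × S → Bool :=
  fun j => ω j.1 j.2

variable (S Λ) in
noncomputable def windowRatio (m : ℝ) (v : Λ × S → Bool) : ℝ :=
  clusterRatio S Λ m (extendCfg v)

lemma clusterRatio_eq_windowRatio (hsym : ∀ s ∈ S, s⁻¹ ∈ S) (m : ℝ) (ω : G → G → Bool) :
    clusterRatio S Λ m ω = windowRatio S Λ m (restrictCfg S Λ ω) :=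
  clusterRatio_congr hsym
    (fun x hx s hs => by simp [extendCfg, restrictCfg, Finset.mem_coe.1 hx, hs]) m

omit [Group G] in
lemma extendCfg_coe (v : Λ × S → Bool) (j : Λ × S) : extendCfg v j.1 j.2 = v j := by
  simp [extendCfg]

omit [Group G] in
lemma extendCfg_update_false (v : Λ × S → Bool) (j : Λ × S) (x s : G) :
    extendCfg (Function.update v j false) x s = true ↔
      extendCfg v x s = true ∧ ¬(x = j.1 ∧ s = j.2) := by
  unfold extendCfg
  split_ifs with h
  · simp only [Function.update_apply, Prod.ext_iff, Subtype.ext_iff]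
    split_ifs with hj <;> simp [hj]
  · simp

lemma card_closedRows_add_one_le_clusterCount (v : Λ × S → Bool) (x₀ : Λ) {ω : G → G → Bool}
    (hω : ∀ y ∈ closedRows (Finset.univ.erase x₀) v, ∀ s ∈ S, ω y s = false) :
    (closedRows (Finset.univ.erase x₀) v).card + 1 ≤ clusterCount S ω Λ := by
  rw [← Finset.card_map (Function.Embedding.subtype _)]
  refine card_add_one_le_clusterCount Λ.finite_toSet x₀.2 _ fun y hy => ?_
  obtain ⟨y, hy', rfl⟩ := Finset.mem_map.1 hy
  exact ⟨y.2, fun h => (Finset.mem_erase.1 (Finset.mem_filter.1 hy').1).1 (Subtype.ext h),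
    hω y hy'⟩

omit [Group G] in
lemma extendCfg_eq_false_of_mem_closedRows {A : Finset Λ} {v : Λ × S → Bool} {y : Λ}
    (hy : y ∈ closedRows A v) (s : G) (hs : s ∈ S) : extendCfg v y s = false := by
  simp [extendCfg, hs, (Finset.mem_filter.1 hy).2]

/-- Closing one bond changes the cluster ratio by `O(1 / K)`, and `K` exceeds the number of
closed vertices. -/
lemma abs_windowRatio_sub_le (hsym : ∀ s ∈ S, s⁻¹ ∈ S) (m : ℝ) (v : Λ × S → Bool)
    (j : Λ × S) :
    |windowRatio S Λ m v - windowRatio S Λ m (Function.update v j false)| ≤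
      min 1 (4 / (1 + ((closedRows (Finset.univ.erase j.1) v).card : ℝ))) := by
  have hfin := Λ.finite_toSet
  unfold windowRatio
  refine le_min ?_ ?_
  · exact abs_sub_le_of_nonneg_of_le (clusterRatio_nonneg m) (clusterRatio_le_one hfin m)
      (clusterRatio_nonneg m) (clusterRatio_le_one hfin m)
  · have hK := card_closedRows_add_one_le_clusterCount v j.1
      fun _ hy => extendCfg_eq_false_of_mem_closedRows hy
    have hK' := card_closedRows_add_one_le_clusterCount v j.1
      (ω := extendCfg (Function.update v j false)) fun y hy s hs => by
        simpa [extendCfg_eq_false_of_mem_closedRows hy s hs] using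
          mt (extendCfg_update_false v j y s).1
    rw [abs_sub_comm]
    exact abs_clusterRatio_sub_le_of_closeBond (extendCfg_update_false v j) hsym hfin m
      (κ := 1 + ((closedRows (Finset.univ.erase j.1) v).card : ℝ)) (by positivity)
      (by rw [add_comm]; exact_mod_cast hK') (by rw [add_comm]; exact_mod_cast hK)

end Window

section Lipschitz

open Finset Function

variable {G : Type*} [Group G] [DecidableEq G] {S Λ : Finset G}

/-- Under the conditioned measure, rows other than that of `j` are closed with probability at
least `∏ s, a s`, so there are about `|Λ| ∏ s, a s` closed vertices. -/
lemma bernoulliExpect_abs_windowRatio_sub_le (hsym : ∀ s ∈ S, s⁻¹ ∈ S) (m : ℝ)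
    {r : Λ × S → ℝ} {a : S → ℝ} (hr : ∀ k, 0 ≤ r k) (har : ∀ k, a k.2 ≤ 1 - r k)
    (ha : ∀ s, 0 < a s) (j : Λ × S) :
    bernoulliExpect (update r j 1)
        (fun v => |windowRatio S Λ m v - windowRatio S Λ m (update v j false)|) ≤
      13 / (Λ.card * ∏ s, a s) := by
  set ρ := ∏ s, a s
  set A := (univ : Finset Λ).erase j.1
  have hr' := update_nonneg_and_le_one (fun k => ⟨hr k, by linarith [har k, ha k.2]⟩) j
    ⟨zero_le_one, le_rfl⟩
  have hρ1 : ρ ≤ 1 := prod_le_one (fun s _ => (ha s).le) fun s _ => by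
    linarith [har (j.1, s), hr (j.1, s)]
  have hrow : ∀ y ∈ A, ρ ≤ rowClosedProb (update r j 1) y := fun y hy =>
    prod_le_prod (fun s _ => (ha s).le) fun s _ => by
      rw [update_of_ne fun h => (mem_erase.1 hy).1 (congrArg Prod.fst h)]
      exact har (y, s)
  have hcard : (A.card : ℝ) + 1 = Λ.card := by
    rw [← Fintype.card_coe Λ, ← card_univ]
    exact_mod_cast card_erase_add_one (mem_univ j.1)
  have hμ : A.card * ρ ≤ ∑ y ∈ A, rowClosedProb (update r j 1) y := by
    simpa using card_nsmul_le_sum A _ ρ hrow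
  calc _ ≤ bernoulliExpect (update r j 1)
          (fun v => min 1 (4 / (1 + ((closedRows A v).card : ℝ)))) :=
        bernoulliExpect_mono hr' fun v => abs_windowRatio_sub_le hsym m v j
    _ ≤ (5 + 2 * 4) / (1 + ∑ y ∈ A, rowClosedProb (update r j 1) y) :=
        bernoulliExpect_min_one_div_card_closedRows_le hr' A (by norm_num)
    _ ≤ 13 / (Λ.card * ρ) := by
        have hρ : 0 < ρ := prod_pos fun s _ => ha s
        have hΛ : (0 : ℝ) < Λ.card := by linarith [Nat.cast_nonneg (α := ℝ) A.card]
        rw [show (5 : ℝ) + 2 * 4 = 13 by norm_num]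
        gcongr
        nlinarith

lemma abs_bernoulliExpect_windowRatio_sub_le (hsym : ∀ s ∈ S, s⁻¹ ∈ S) (m : ℝ)
    {p q a : S → ℝ} (hp : ∀ s, 0 ≤ p s) (hq : ∀ s, 0 ≤ q s) (hap : ∀ s, a s ≤ 1 - p s)
    (haq : ∀ s, a s ≤ 1 - q s) (ha : ∀ s, 0 < a s) :
    |bernoulliExpect (fun j : Λ × S => p j.2) (windowRatio S Λ m) -
        bernoulliExpect (fun j : Λ × S => q j.2) (windowRatio S Λ m)| ≤
      13 / (∏ s, a s) * ∑ s, |p s - q s| := by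
  have hρ : 0 < ∏ s, a s := prod_pos fun s _ => ha s
  have hB : ∀ (T : Finset (Λ × S)) (j : Λ × S),
      bernoulliExpect (update (T.piecewise (fun k => q k.2) fun k => p k.2) j 1)
        (fun v => |windowRatio S Λ m v - windowRatio S Λ m (update v j false)|) ≤
      13 / (Λ.card * ∏ s, a s) := fun T j =>
    bernoulliExpect_abs_windowRatio_sub_le hsym m
      (fun k => T.piecewise_cases (fun k => q k.2) (fun k => p k.2) (fun x => 0 ≤ x)
        (hq k.2) (hp k.2))
      (fun k => T.piecewise_cases (fun k => q k.2) (fun k => p k.2) (fun x => a k.2 ≤ 1 - x)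
        (haq k.2) (hap k.2)) ha j
  have hp' : ∀ j : Λ × S, 0 ≤ p j.2 ∧ p j.2 ≤ 1 :=
    fun j => ⟨hp j.2, by linarith [hap j.2, ha j.2]⟩
  have hq' : ∀ j : Λ × S, 0 ≤ q j.2 ∧ q j.2 ≤ 1 :=
    fun j => ⟨hq j.2, by linarith [haq j.2, ha j.2]⟩
  refine (abs_bernoulliExpect_sub_le hp' hq' _ hB).trans ?_
  simp only [Fintype.sum_prod_type, sum_const, card_univ, Fintype.card_coe, nsmul_eq_mul]
  rcases (Nat.cast_nonneg (α := ℝ) Λ.card).eq_or_lt with hΛ | hΛ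
  · rw [← hΛ, zero_mul, zero_mul]
    exact mul_nonneg (div_nonneg (by norm_num) hρ.le) (sum_nonneg fun s _ => abs_nonneg _)
  · exact le_of_eq (by field_simp)

end Lipschitz

section Measure

variable {G : Type*} [Group G] [DecidableEq G] {S Λ : Finset G}

omit [Group G] [DecidableEq G] in
lemma measurable_restrictCfg : Measurable (restrictCfg S Λ) :=
  measurable_pi_lambda _ fun _ => (measurable_pi_apply _).comp (measurable_pi_apply _)

lemma measurable_clusterRatio (hsym : ∀ s ∈ S, s⁻¹ ∈ S) (m : ℝ) :
    Measurable (clusterRatio S (Λ : Set G) m) := by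
  rw [show clusterRatio S (Λ : Set G) m = windowRatio S Λ m ∘ restrictCfg S Λ from
    funext (clusterRatio_eq_windowRatio hsym m)]
  exact (measurable_of_countable _).comp measurable_restrictCfg

section Cylinders

variable {P : Measure (G → G → Bool)} {p : S → ℝ} (hp : ∀ s, 0 ≤ p s ∧ p s ≤ 1)
  (hcyl : ∀ (E : Finset (G × S)) (a : G × S → Bool),
    P {ω | ∀ q ∈ E, ω q.1 ↑q.2 = a q} =
      ∏ q ∈ E, ENNReal.ofReal (if a q then p q.2 else 1 - p q.2))
include hp hcyl

omit [Group G] in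
lemma measureReal_restrictCfg_preimage (v : Λ × S → Bool) :
    P.real (restrictCfg S Λ ⁻¹' {v}) = bernoulliMass (fun j => p j.2) v := by
  have hset : restrictCfg S Λ ⁻¹' {v} =
      {ω | ∀ q ∈ Λ ×ˢ (Finset.univ : Finset S), ω q.1 ↑q.2 = extendCfg v q.1 q.2} := by
    ext ω
    simp only [mem_preimage, mem_singleton_iff, funext_iff, Prod.forall, restrictCfg,
      Finset.mem_product, Finset.mem_univ, and_true, mem_ofPred_eq, extendCfg]
    exact ⟨fun h x s hx => by rw [dif_pos ⟨hx, s.2⟩]; exact h ⟨x, hx⟩ s,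
      fun h x s => by simpa [x.2] using h x s x.2⟩
  have hnn : ∀ j : Λ × S, 0 ≤ if v j then p j.2 else 1 - p j.2 := fun j => by
    split_ifs <;> linarith [hp j.2]
  rw [measureReal_def, hset, hcyl, ENNReal.toReal_prod, Finset.prod_product,
    ← Finset.prod_coe_sort Λ, bernoulliMass, Fintype.prod_prod_type]
  refine Finset.prod_congr rfl fun x _ => Finset.prod_congr rfl fun s _ => ?_
  rw [extendCfg_coe v (x, s), ENNReal.toReal_ofReal (hnn (x, s))]

omit [Group G] in
lemma integral_comp_restrictCfg [IsFiniteMeasure P] (f : (Λ × S → Bool) → ℝ) :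
    ∫ ω, f (restrictCfg S Λ ω) ∂P = bernoulliExpect (fun j => p j.2) f := by
  rw [← integral_map measurable_restrictCfg.aemeasurable
    (measurable_of_countable f).aestronglyMeasurable, integral_fintype Integrable.of_finite]
  refine Finset.sum_congr rfl fun v _ => ?_
  rw [map_measureReal_apply measurable_restrictCfg (measurableSet_singleton v),
    measureReal_restrictCfg_preimage hp hcyl, smul_eq_mul]

end Cylinders

lemma tendsto_integral_clusterRatio (hsym : ∀ s ∈ S, s⁻¹ ∈ S) {μ : Measure (G → G → Bool)}
    [IsProbabilityMeasure μ] {Λ : ℕ → Finset G} {Φ : ℝ → ℝ}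
    (hlim : ∀ᵐ ω ∂μ, TendstoUniformly (fun n m => clusterRatio S (Λ n) m ω) Φ atTop) (m : ℝ) :
    Tendsto (fun n => ∫ ω, clusterRatio S (Λ n) m ω ∂μ) atTop (nhds (Φ m)) := by
  have h := tendsto_integral_of_dominated_convergence (μ := μ) (fun _ => (1 : ℝ))
    (fun n => (measurable_clusterRatio hsym m).aestronglyMeasurable) (integrable_const 1)
    (fun n => ae_of_all _ fun ω => by
      rw [Real.norm_eq_abs, abs_le]
      exact ⟨by linarith [clusterRatio_nonneg (S := S) (Λ := (Λ n : Set G)) (ω := ω) m],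
        clusterRatio_le_one (Λ n).finite_toSet m⟩)
    (hlim.mono fun ω h => h.tendsto_at m)
  simpa using h

end Measure

theorem stmt_19_general {G : Type*} [Group G] (S : Finset G)
    (hsym : ∀ s ∈ S, s⁻¹ ∈ S)
    (Λ : ℕ → Set G) (hfin : ∀ n, (Λ n).Finite)
    (P : EuclideanSpace ℝ {x // x ∈ S} → Measure (G → G → Bool))
    (hprob : ∀ ppar : EuclideanSpace ℝ {x // x ∈ S}, (∀ s, 0 ≤ ppar s ∧ ppar s < 1) →
      IsProbabilityMeasure (P ppar))
    -- P p is the product Bernoulli measure with parameters p: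
    (hcyl : ∀ ppar : EuclideanSpace ℝ {x // x ∈ S}, (∀ s, 0 ≤ ppar s ∧ ppar s < 1) →
      ∀ (E : Finset (G × {x // x ∈ S})) (a : G × {x // x ∈ S} → Bool),
        P ppar {ω | ∀ q ∈ E, ω q.1 ↑q.2 = a q} =
          ∏ q ∈ E, ENNReal.ofReal (if a q then ppar q.2 else 1 - ppar q.2))
    (Φ : EuclideanSpace ℝ {x // x ∈ S} → ℝ → ℝ)
    -- Φ_p is the ℙ_p-almost sure uniform limit of F_ω(Λ_n)/K_ω(Λ_n):
    (hlim : ∀ ppar, (∀ s, 0 ≤ ppar s ∧ ppar s < 1) →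
      ∀ᵐ ω ∂(P ppar),
        TendstoUniformly
          (fun n m => (Fdist S ω (Λ n) m : ℝ) / (clusterCount S ω (Λ n) : ℝ))
          (Φ ppar) atTop) :
    -- Ψ : p ↦ Φ_p is continuous on [0,1)^S w.r.t. the supremum norm on ℬ(ℝ):
    ∀ ppar, (∀ s, 0 ≤ ppar s ∧ ppar s < 1) → ∀ ε : ℝ, 0 < ε →
      ∃ δ : ℝ, 0 < δ ∧ ∀ qpar, (∀ s, 0 ≤ qpar s ∧ qpar s < 1) →
        dist qpar ppar < δ → ∀ m : ℝ, |Φ qpar m - Φ ppar m| ≤ ε := by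
  classical
  obtain ⟨Λ, rfl⟩ : ∃ Λ' : ℕ → Finset G, Λ = fun n => ↑(Λ' n) :=
    ⟨fun n => (hfin n).toFinset, funext fun n => (hfin n).coe_toFinset.symm⟩
  have hΦ : ∀ r, (∀ s, 0 ≤ r s ∧ r s < 1) → ∀ m, Tendsto (fun n =>
      bernoulliExpect (fun j : Λ n × S => r j.2) (windowRatio S (Λ n) m)) atTop (nhds (Φ r m)) := by
    intro r hr m
    have := hprob r hr
    refine (tendsto_integral_clusterRatio hsym (hlim r hr) m).congr fun n => ?_
    simp only [clusterRatio_eq_windowRatio hsym]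
    exact integral_comp_restrictCfg (fun s => ⟨(hr s).1, (hr s).2.le⟩) (hcyl r hr) _
  intro p hp ε hε
  set a : S → ℝ := fun s => (1 - p s) / 2 with ha_def
  have hap : ∀ s, a s ≤ 1 - p s := fun s => by rw [ha_def]; linarith [(hp s).2]
  have ha : ∀ s, 0 < a s := fun s => by rw [ha_def]; linarith [(hp s).2]
  set ρ := ∏ s, a s
  have hρ : 0 < ρ := Finset.prod_pos fun s _ => ha s
  have hρa : ∀ s, ρ ≤ a s := prod_le_apply_of_nonneg_of_le_one (fun s => (ha s).le)
    fun s => by linarith [hap s, (hp s).1]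
  set L := 13 / ρ * S.card
  refine ⟨min ρ (ε / (L + 1)), by positivity, fun q hq hdist m => ?_⟩
  have haq : ∀ s, a s ≤ 1 - q s := fun s => by
    have hs : |p s - q s| < ρ := by
      rw [abs_sub_comm, ← Real.dist_eq]
      exact (PiLp.dist_apply_le q p s).trans_lt (hdist.trans_le (min_le_left _ _))
    linarith [neg_abs_le (p s - q s), hρa s, show a s = (1 - p s) / 2 from rfl]
  refine le_of_tendsto' ((hΦ q hq m).sub (hΦ p hp m)).abs fun n => ?_
  calc _ ≤ 13 / ρ * ∑ s, |q s - p s| :=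
        abs_bernoulliExpect_windowRatio_sub_le hsym m (fun s => (hq s).1) (fun s => (hp s).1)
          haq hap ha
    _ ≤ L * dist q p := by
        rw [mul_assoc, ← Fintype.card_coe S]
        gcongr
        simpa [Real.dist_eq] using PiLp.sum_dist_apply_le q p
    _ ≤ (L + 1) * (ε / (L + 1)) :=
        mul_le_mul (by linarith) (hdist.le.trans (min_le_right _ _)) dist_nonneg (by positivity)
    _ = ε := mul_div_cancel₀ _ (by positivity)

/-- Theorem 8.10: continuity of `p ↦ Φ_p` on `[0,1)^S`, where `[0,1)^S` carries the
ℓ²-metric and the distribution functions `Φ_p` are compared in supremum norm. -/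
theorem stmt_19 {G : Type*} [Group G] (S : Finset G)
    (hsym : ∀ s ∈ S, s⁻¹ ∈ S) (hgen : Subgroup.closure (S : Set G) = ⊤)
    (Λ : ℕ → Set G) (hfin : ∀ n, (Λ n).Finite) (hne : ∀ n, (Λ n).Nonempty)
    -- (Λ_n) is a Følner sequence:
    (hfol : ∀ K : Set G, K.Finite → K.Nonempty →
      Tendsto (fun n => ((symmDiff (Λ n) (K * Λ n)).ncard : ℝ) / ((Λ n).ncard : ℝ))
        atTop (nhds 0))
    -- (Λ_n) is tempered:
    (htemp : ∃ c : ℝ, 0 < c ∧ ∀ n : ℕ,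
      ((⋃ k ∈ Finset.range n, (Λ k)⁻¹ * Λ n).ncard : ℝ) ≤ c * ((Λ n).ncard : ℝ))
    (P : EuclideanSpace ℝ {x // x ∈ S} → Measure (G → G → Bool))
    (hprob : ∀ ppar : EuclideanSpace ℝ {x // x ∈ S}, (∀ s, 0 ≤ ppar s ∧ ppar s < 1) →
      IsProbabilityMeasure (P ppar))
    -- P p is the product Bernoulli measure with parameters p:
    (hcyl : ∀ ppar : EuclideanSpace ℝ {x // x ∈ S}, (∀ s, 0 ≤ ppar s ∧ ppar s < 1) →
      ∀ (E : Finset (G × {x // x ∈ S})) (a : G × {x // x ∈ S} → Bool),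
        P ppar {ω | ∀ q ∈ E, ω q.1 ↑q.2 = a q} =
          ∏ q ∈ E, ENNReal.ofReal (if a q then ppar q.2 else 1 - ppar q.2))
    (Φ : EuclideanSpace ℝ {x // x ∈ S} → ℝ → ℝ)
    -- each Φ_p is a bounded (right-continuous) function:
    (hbdd : ∀ ppar, (∀ s, 0 ≤ ppar s ∧ ppar s < 1) → ∃ Cb : ℝ, ∀ m : ℝ, |Φ ppar m| ≤ Cb)
    (hrc : ∀ ppar, (∀ s, 0 ≤ ppar s ∧ ppar s < 1) →
      ∀ m : ℝ, ContinuousWithinAt (Φ ppar) (Set.Ici m) m)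
    -- Φ_p is the ℙ_p-almost sure uniform limit of F_ω(Λ_n)/K_ω(Λ_n):
    (hlim : ∀ ppar, (∀ s, 0 ≤ ppar s ∧ ppar s < 1) →
      ∀ᵐ ω ∂(P ppar),
        TendstoUniformly
          (fun n m => (Fdist S ω (Λ n) m : ℝ) / (clusterCount S ω (Λ n) : ℝ))
          (Φ ppar) atTop) :
    -- Ψ : p ↦ Φ_p is continuous on [0,1)^S w.r.t. the supremum norm on ℬ(ℝ):
    ∀ ppar, (∀ s, 0 ≤ ppar s ∧ ppar s < 1) → ∀ ε : ℝ, 0 < ε →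
      ∃ δ : ℝ, 0 < δ ∧ ∀ qpar, (∀ s, 0 ≤ qpar s ∧ qpar s < 1) →
        dist qpar ppar < δ → ∀ m : ℝ, |Φ qpar m - Φ ppar m| ≤ ε :=
  stmt_19_general S hsym Λ hfin P hprob hcyl Φ hlim
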